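/- Let f : ℝ → ℝ be a bounded measurable function with 0 ≤ f ≤ 1, f(ξ) = 1 for ξ < -M, f(ξ) = 0 for ξ > M, and f nonincreasing (i.e. its distributional derivative is a nonpositive measure). If f = f² almost everywhere, then there exists u ∈ [-M, M] such that f(ξ) = 𝟙_{ξ<u} for almost every ξ. -/

import Mathlib

/-! The superlevel set `{ξ | 1/2 < f ξ}` of an antitone `f` is a half-line with endpoint
`u = sSup {ξ | 1/2 < f ξ}`, so `f > 1/2` left of `u` and `f ≤ 1/2` right of `u`. Since `f` takes
only the values `0` and `1` almost everywhere and `{u}` is null, this pins down `f` a.e. -/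

open MeasureTheory Set

section Superlevel

variable {α β : Type*} [ConditionallyCompleteLinearOrder α] [LinearOrder β] {f : α → β} {c : β}
  {ξ : α}

theorem Antitone.lt_of_lt_csSup_setOf_lt (hf : Antitone f) (hne : {x | c < f x}.Nonempty)
    (hξ : ξ < sSup {x | c < f x}) : c < f ξ := by
  obtain ⟨x, hx, hξx⟩ := exists_lt_of_lt_csSup hne hξ
  exact hx.trans_le (hf hξx.le)

theorem le_of_csSup_setOf_lt_lt (hbdd : BddAbove {x | c < f x})
    (hξ : sSup {x | c < f x} < ξ) : f ξ ≤ c :=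
  not_lt.1 fun h => (le_csSup hbdd h).not_gt hξ

end Superlevel

theorem ae_eq_ite_lt_of_ae_zero_or_one {α : Type*} [MeasurableSpace α] [LinearOrder α]
    {μ : Measure α} [NullSingletonClass μ] {f : α → ℝ} {u : α}
    (h01 : ∀ᵐ ξ ∂μ, f ξ = 0 ∨ f ξ = 1) (hlt : ∀ ξ < u, 1 / 2 < f ξ)
    (hgt : ∀ ξ, u < ξ → f ξ ≤ 1 / 2) : ∀ᵐ ξ ∂μ, f ξ = if ξ < u then 1 else 0 := by
  filter_upwards [h01, μ.ae_ne u] with ξ hξ hne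
  rcases hne.lt_or_gt with h | h
  · have := hlt ξ h
    rcases hξ with h0 | h1
    · linarith
    · simp [h, h1]
  · have := hgt ξ h
    rcases hξ with h0 | h1
    · simp [h.not_gt, h0]
    · linarith

theorem stmt_3_general (M : ℝ) (f : ℝ → ℝ)
    (hleft : ∀ ξ, ξ < -M → f ξ = 1)
    (hright : ∀ ξ, M < ξ → f ξ = 0)
    (hmono : Antitone f)
    (hidem : ∀ᵐ ξ : ℝ, f ξ = (f ξ) ^ 2) :
    ∃ u ∈ Set.Icc (-M) M, ∀ᵐ ξ : ℝ, f ξ = if ξ < u then 1 else 0 := by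
  set S := {ξ | (1 : ℝ) / 2 < f ξ}
  have hS_le : S ⊆ Iic M := fun ξ hξ => mem_Iic.2 <| not_lt.1 fun h => by norm_num [S, hright ξ h] at hξ
  have hIio_S : Iio (-M) ⊆ S := fun ξ hξ => by norm_num [S, hleft ξ hξ]
  have hne : S.Nonempty := nonempty_Iio.mono hIio_S
  have hbdd : BddAbove S := ⟨M, hS_le⟩
  have h01 : ∀ᵐ ξ : ℝ, f ξ = 0 ∨ f ξ = 1 := hidem.mono fun ξ h =>
    IsIdempotentElem.iff_eq_zero_or_one.1 (by rw [IsIdempotentElem, ← sq, ← h])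
  refine ⟨sSup S, ⟨?_, csSup_le hne hS_le⟩, ae_eq_ite_lt_of_ae_zero_or_one h01
    (fun _ => hmono.lt_of_lt_csSup_setOf_lt hne) (fun _ => le_of_csSup_setOf_lt_lt hbdd)⟩
  calc -M = sSup (Iio (-M)) := csSup_Iio.symm
    _ ≤ sSup S := csSup_le_csSup hbdd nonempty_Iio hIio_S

theorem stmt_3 (M : ℝ) (f : ℝ → ℝ) (hmeas : Measurable f)
    (hbd : ∀ ξ, 0 ≤ f ξ ∧ f ξ ≤ 1)
    (hleft : ∀ ξ, ξ < -M → f ξ = 1)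
    (hright : ∀ ξ, M < ξ → f ξ = 0)
    (hmono : Antitone f)
    (hidem : ∀ᵐ ξ : ℝ, f ξ = (f ξ) ^ 2) :
    ∃ u ∈ Set.Icc (-M) M, ∀ᵐ ξ : ℝ, f ξ = if ξ < u then 1 else 0 :=
  stmt_3_general M f hleft hright hmono hidem
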